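/- arXiv:2601.20400 — 3 statements merged into one kernel-verified Lean document; each statement's English description precedes it below -/
import Mathlib

section
/- In dimension d = 2, if the balls B_δ(x_i), i ∈ [n], are pairwise disjoint, then the induced edge-labeled graph G_X is both 1-exclusive and 2-exclusive. -/
/-- The closed `L∞` ball of radius `δ` centered at `x` in `ℤ^2`. -/
def ballInf2 (δ : ℤ) (x : Fin 2 → ℤ) : Set (Fin 2 → ℤ) :=
  {z | ∀ l, z l ∈ Set.Icc (x l - δ) (x l + δ)}

/-- Label `l` of edge `(i,j)` in the induced edge-labeled graph (d = 2). -/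
def hasLabel2 (n : ℕ) (δ : ℤ) (x : Fin n → Fin 2 → ℤ) (i j : Fin n) (l : Fin 2) : Prop :=
  (Set.Icc (x i l - δ) (x i l + δ) ∩ Set.Icc (x j l - δ) (x j l + δ)).Nonempty

theorem stmt6 (n : ℕ) (δ : ℤ) (x : Fin n → Fin 2 → ℤ)
    (hdisj : ∀ i j : Fin n, i ≠ j → ballInf2 δ (x i) ∩ ballInf2 δ (x j) = ∅) :
    ∀ a : Fin 2, ∀ i j : Fin n, i ≠ j → hasLabel2 n δ x i j a →
      ∀ b : Fin 2, b ≠ a → ¬ hasLabel2 n δ x i j b := by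
  intro a i j hij ha b hba hb
  obtain ⟨za, hza⟩ := ha
  obtain ⟨zb, hzb⟩ := hb
  set z : Fin 2 → ℤ := fun l => if l = a then za else zb with hz
  have hmem : ∀ l, z l ∈ Set.Icc (x i l - δ) (x i l + δ) ∩
      Set.Icc (x j l - δ) (x j l + δ) := by
    intro l
    by_cases h : l = a
    · simpa [hz, h] using hza
    · have hlb : l = b := by fin_cases l <;> fin_cases a <;> fin_cases b <;> simp_all
      simpa [hz, hlb, hba] using hzb
  have hmem' : z ∈ ballInf2 δ (x i) ∩ ballInf2 δ (x j) :=
    ⟨fun l => (hmem l).1, fun l => (hmem l).2⟩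
  have := hdisj i j hij
  rw [this] at hmem'
  exact hmem'
end

section
/- Let X = {x_1,…,x_n} ⊂ K^d with threshold δ such that the degree of the induced edge-labeled graph G_X is at most (3/2)d − 1, where deg(v) = ∑_{w≠v} |φ((v,w))|. Then X is d-stripable: there exists a partition X = Z_1 ⊔ … ⊔ Z_d such that for each a ∈ [d], the induced subgraph G_{Z_a} is a-exclusive. -/
open Classical

/-- Label `l` of edge `(i,j)` in the induced edge-labeled graph. -/
def hasLabel (d n : ℕ) (δ : ℤ) (x : Fin n → Fin d → ℤ) (i j : Fin n) (l : Fin d) : Prop :=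
  (Set.Icc (x i l - δ) (x i l + δ) ∩ Set.Icc (x j l - δ) (x j l + δ)).Nonempty

/-- The label set `φ((i,j))` as a finset. -/
noncomputable def labels (d n : ℕ) (δ : ℤ) (x : Fin n → Fin d → ℤ) (i j : Fin n) :
    Finset (Fin d) :=
  Finset.univ.filter (fun l => ∃ v : ℤ, v ∈ Set.Icc (x i l - δ) (x i l + δ) ∩
    Set.Icc (x j l - δ) (x j l + δ))

/-- Degree of a vertex: labels counted with multiplicity over all other vertices. -/
noncomputable def degLab (d n : ℕ) (δ : ℤ) (x : Fin n → Fin d → ℤ) (v : Fin n) : ℕ :=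
  ∑ w ∈ Finset.univ.filter (fun w => w ≠ v), (labels d n δ x v w).card

lemma labels_comm (d n : ℕ) (δ : ℤ) (x : Fin n → Fin d → ℤ) (i j : Fin n) :
    labels d n δ x i j = labels d n δ x j i := by
  ext l
  simp only [labels, Finset.mem_filter, Finset.mem_univ, true_and, Set.mem_inter_iff]
  constructor <;> rintro ⟨v, h1, h2⟩ <;> exact ⟨v, h2, h1⟩

lemma mem_labels_iff (d n : ℕ) (δ : ℤ) (x : Fin n → Fin d → ℤ) (i j : Fin n) (l : Fin d) :
    l ∈ labels d n δ x i j ↔ hasLabel d n δ x i j l := by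
  simp only [labels, Finset.mem_filter, Finset.mem_univ, true_and, hasLabel, Set.Nonempty]

noncomputable def stripF (d n : ℕ) (δ : ℤ) (x : Fin n → Fin d → ℤ) (hd : 0 < d) :
    Fin n → Fin d := fun i =>
  let forb : Finset (Fin d) :=
    (Finset.univ.filter (fun j : Fin n => j.val < i.val ∧ 2 ≤ (labels d n δ x i j).card)).attach.image
      (fun j => stripF d n δ x hd j.1)
  if h : (Finset.univ \ forb).Nonempty then h.choose else ⟨0, hd⟩
termination_by i => i.val
decreasing_by
  have := j.2
  simp only [Finset.mem_filter] at this
  exact this.2.1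

lemma stripF_spec (d n : ℕ) (δ : ℤ) (x : Fin n → Fin d → ℤ) (hd : 0 < d)
    (hdeg : ∀ v : Fin n, 2 * degLab d n δ x v + 2 ≤ 3 * d) (i j : Fin n)
    (hij : j.val < i.val) (hcard : 2 ≤ (labels d n δ x i j).card) :
    stripF d n δ x hd j ≠ stripF d n δ x hd i := by
  conv_rhs => rw [stripF]
  set bad : Finset (Fin n) :=
    Finset.univ.filter (fun j : Fin n => j.val < i.val ∧ 2 ≤ (labels d n δ x i j).card) with hbad
  set forb : Finset (Fin d) := bad.attach.image (fun j => stripF d n δ x hd j.1) with hforb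
  have hsub : bad ⊆ Finset.univ.filter (fun w => w ≠ i) := by
    intro w hw
    simp only [hbad, Finset.mem_filter] at hw ⊢
    refine ⟨hw.1, fun h => ?_⟩
    subst h; omega
  have h2 : 2 * bad.card ≤ degLab d n δ x i := by
    calc 2 * bad.card = ∑ _j ∈ bad, 2 := by
          rw [Finset.sum_const, smul_eq_mul, mul_comm]
      _ ≤ ∑ j ∈ bad, (labels d n δ x i j).card :=
          Finset.sum_le_sum (fun w hw => (Finset.mem_filter.mp hw).2.2)
      _ ≤ ∑ w ∈ Finset.univ.filter (fun w => w ≠ i), (labels d n δ x i w).card :=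
          Finset.sum_le_sum_of_subset hsub
      _ = degLab d n δ x i := rfl
  have hfc : forb.card ≤ bad.card := by
    calc forb.card ≤ bad.attach.card := Finset.card_image_le
      _ = bad.card := Finset.card_attach
  have hflt : forb.card < d := by
    have := hdeg i
    omega
  have hne : (Finset.univ \ forb).Nonempty := by
    rw [Finset.sdiff_nonempty]
    intro hsub'
    have := Finset.card_le_card hsub'
    rw [Finset.card_univ, Fintype.card_fin] at this
    omega
  rw [dif_pos hne]
  have hchoose := hne.choose_spec
  rw [Finset.mem_sdiff] at hchoose
  intro heq
  apply hchoose.2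
  rw [← heq, hforb]
  exact Finset.mem_image.mpr ⟨⟨j, Finset.mem_filter.mpr ⟨Finset.mem_univ _, hij, hcard⟩⟩, Finset.mem_attach _ _, rfl⟩

theorem stmt12 (d n : ℕ) (δ : ℤ) (x : Fin n → Fin d → ℤ)
    (hdeg : ∀ v : Fin n, 2 * degLab d n δ x v + 2 ≤ 3 * d) :
    ∃ strip : Fin n → Fin d,
      ∀ i i' : Fin n, i ≠ i' → strip i = strip i' →
        hasLabel d n δ x i i' (strip i) →
          ∀ b : Fin d, b ≠ strip i → ¬ hasLabel d n δ x i i' b := by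
  rcases Nat.eq_zero_or_pos d with hd | hd
  · -- d = 0 forces n = 0
    have hn : n = 0 := by
      by_contra hn
      have v : Fin n := ⟨0, Nat.pos_of_ne_zero hn⟩
      have := hdeg v
      omega
    subst hn
    exact ⟨fun i => i.elim0, fun i => i.elim0⟩
  · refine ⟨stripF d n δ x hd, ?_⟩
    intro i i' hne heq hlab b hb hlabb
    have hm1 : stripF d n δ x hd i ∈ labels d n δ x i i' := (mem_labels_iff _ _ _ _ _ _ _).mpr hlab
    have hm2 : b ∈ labels d n δ x i i' := (mem_labels_iff _ _ _ _ _ _ _).mpr hlabb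
    have hcard : 2 ≤ (labels d n δ x i i').card :=
      Finset.one_lt_card.mpr ⟨_, hm1, _, hm2, fun h => hb h.symm⟩
    have hvne : i.val ≠ i'.val := fun h => hne (Fin.ext h)
    rcases Nat.lt_or_ge i.val i'.val with hlt | hge
    · exact stripF_spec d n δ x hd hdeg i' i hlt (by rwa [labels_comm]) heq
    · exact stripF_spec d n δ x hd hdeg i i' (by omega) hcard heq.symm
end

section
/- In the key step of the 3/2-degree stripability proof: if a vertex v of an edge-labeled graph with labels in [d] and degree deg(v) ≤ (3/2)d − 1 is such that every label a ∈ [d] appears on some edge at v, and for no label a is the star at v a-exclusive, then v has at most d − 1 neighbors. -/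
/-!
If no label is exclusive, every label sits on an edge carrying at least two labels, so those
edges carry at least `d` labels in total. An edge with `k` labels satisfies
`2 · [k ≥ 1] + [k ≥ 2] · k ≤ 2k`; summing over the edges gives
`2 · #neighbors + d ≤ 2 · deg(v) ≤ 3d - 2`.
-/

open Finset

variable {V α : Type*} [Fintype V] (lab : V → Finset α)

theorem card_univ_le_sum_card_of_forall_mem_ne_singleton [Fintype α] [DecidableEq α]
    (h : ∀ a : α, ∃ w, a ∈ lab w ∧ lab w ≠ {a}) :
    Fintype.card α ≤ ∑ w ∈ univ.filter (fun w => 2 ≤ #(lab w)), #(lab w) := by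
  have hcover : (univ : Finset α) ⊆ (univ.filter (fun w => 2 ≤ #(lab w))).biUnion lab := by
    intro a _
    obtain ⟨w, ha, hne⟩ := h a
    have htwo : 1 < #(lab w) :=
      one_lt_card_iff_nontrivial.2 ((nontrivial_iff_ne_singleton ha).2 hne)
    exact mem_biUnion.2 ⟨w, mem_filter.2 ⟨mem_univ w, htwo⟩, ha⟩
  calc Fintype.card α = #(univ : Finset α) := card_univ.symm
    _ ≤ _ := card_le_card hcover
    _ ≤ _ := card_biUnion_le

theorem two_mul_card_nonempty_add_sum_card_le :
    2 * #(univ.filter (fun w => (lab w).Nonempty))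
        + ∑ w ∈ univ.filter (fun w => 2 ≤ #(lab w)), #(lab w)
      ≤ 2 * ∑ w, #(lab w) := by
  rw [card_filter, sum_filter, mul_sum, mul_sum, ← sum_add_distrib]
  refine sum_le_sum fun w _ => ?_
  rcases (lab w).eq_empty_or_nonempty with hempty | hne
  · simp [hempty]
  · have hpos : 0 < #(lab w) := hne.card_pos
    split_ifs <;> omega

theorem stmt13_general (d : ℕ) (V : Type) [Fintype V]
    (lab : V → Finset (Fin d))
    (hdeg : 2 * (∑ w : V, (lab w).card) + 2 ≤ 3 * d)
    (hnoexc : ∀ a : Fin d, ∃ w : V, a ∈ lab w ∧ lab w ≠ {a}) :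
    (Finset.univ.filter (fun w : V => (lab w).Nonempty)).card ≤ d - 1 := by
  have hlabels := card_univ_le_sum_card_of_forall_mem_ne_singleton lab hnoexc
  have hcount := two_mul_card_nonempty_add_sum_card_le lab
  rw [Fintype.card_fin] at hlabels
  omega

/-- Star of an edge-labeled graph at a vertex `v`: the type `V` indexes the
other vertices, and `lab w` is the (possibly empty) label set of the edge `(v,w)`. -/
theorem stmt13 (d : ℕ) (V : Type) [Fintype V] [DecidableEq V]
    (lab : V → Finset (Fin d))
    (hdeg : 2 * (∑ w : V, (lab w).card) + 2 ≤ 3 * d)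
    (hall : ∀ a : Fin d, ∃ w : V, a ∈ lab w)
    (hnoexc : ∀ a : Fin d, ∃ w : V, a ∈ lab w ∧ lab w ≠ {a}) :
    (Finset.univ.filter (fun w : V => (lab w).Nonempty)).card ≤ d - 1 :=
  stmt13_general d V lab hdeg hnoexc
end
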